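/- arXiv:1905.02519 — 2 statements merged into one kernel-verified Lean document; each statement's English description precedes it below -/
import Mathlib

section
/- Let X = ⨆_{λ∈Λ} G_λ be a multiple conjugation quandle, R a ring, and let f₁, f₂ : X × X → R and f₃, f₄ : ⨆_{λ∈Λ} (G_λ × G_λ) → R satisfy conditions (0-i)–(4-iii). Define g₁, g₂ : X × X → R by g₁(x,y) = f₁(e_x, y) and g₂(x,y) = f₃(x ◁ y, x⁻¹ ◁ y) f₂(x,y) f₃(e_y, y), where e_x denotes the identity of the group component containing x. Then (g₁, g₂) is an MCQ Alexander pair. -/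
universe u v w x u' v'

/-- The raw data of a disjoint union of "groups" `G l` (with multiplication `mul`,
identity `one` and inversion `inv` on each component) together with a binary
operation `op` on the disjoint union `Σ l, G l`. -/
structure MCQData (Λ : Type u) (G : Λ → Type v) where
  mul : ∀ l : Λ, G l → G l → G l
  one : ∀ l : Λ, G l
  inv : ∀ l : Λ, G l → G l
  op  : (Σ l, G l) → (Σ l, G l) → (Σ l, G l)

namespace MCQData

variable {Λ : Type u} {G : Λ → Type v}

/-- Each component `G l` is a group with respect to the given data. -/
def IsGroupData (D : MCQData Λ G) : Prop :=
  (∀ (l : Λ) (a b c : G l), D.mul l (D.mul l a b) c = D.mul l a (D.mul l b c)) ∧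
  (∀ (l : Λ) (a : G l), D.mul l (D.one l) a = a) ∧
  (∀ (l : Λ) (a : G l), D.mul l a (D.one l) = a) ∧
  (∀ (l : Λ) (a : G l), D.mul l (D.inv l a) a = D.one l) ∧
  (∀ (l : Λ) (a : G l), D.mul l a (D.inv l a) = D.one l)

/-- `D` is a multiple conjugation quandle (MCQ): each component is a group,
the operation restricts to conjugation on each component, and the axioms of an
MCQ hold.  In the last axiom, `a ◁ x` and `b ◁ x` lie in a common component
`G m` and `(ab) ◁ x = (a ◁ x)(b ◁ x)` there. -/
def IsMCQ (D : MCQData Λ G) : Prop :=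
  D.IsGroupData ∧
  (∀ (l : Λ) (a b : G l),
    D.op ⟨l, a⟩ ⟨l, b⟩ = ⟨l, D.mul l (D.mul l (D.inv l b) a) b⟩) ∧
  (∀ (x : Σ l, G l) (l : Λ), D.op x ⟨l, D.one l⟩ = x) ∧
  (∀ (x : Σ l, G l) (l : Λ) (a b : G l),
    D.op x ⟨l, D.mul l a b⟩ = D.op (D.op x ⟨l, a⟩) ⟨l, b⟩) ∧
  (∀ x y z : Σ l, G l, D.op (D.op x y) z = D.op (D.op x z) (D.op y z)) ∧
  (∀ (l : Λ) (a b : G l) (x : Σ l, G l), ∃ (m : Λ) (a' b' : G m),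
    D.op ⟨l, a⟩ x = ⟨m, a'⟩ ∧ D.op ⟨l, b⟩ x = ⟨m, b'⟩ ∧
    D.op ⟨l, D.mul l a b⟩ x = ⟨m, D.mul m a' b'⟩)

/-- `(f₁, f₂)` is an MCQ Alexander pair for the MCQ `D` with values in the ring `R`. -/
def IsMCQAlexanderPair (D : MCQData Λ G) {R : Type w} [Ring R]
    (f₁ f₂ : (Σ l, G l) → (Σ l, G l) → R) : Prop :=
  (∀ (l : Λ) (a b : G l),
    f₁ ⟨l, a⟩ ⟨l, b⟩ + f₂ ⟨l, a⟩ ⟨l, b⟩ = f₁ ⟨l, a⟩ ⟨l, D.mul l (D.inv l a) b⟩) ∧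
  (∀ (l : Λ) (a b : G l) (x : Σ l, G l), f₁ ⟨l, a⟩ x = f₁ ⟨l, b⟩ x) ∧
  (∀ (l : Λ) (a b : G l) (x : Σ l, G l),
    f₂ ⟨l, D.mul l a b⟩ x =
      f₂ ⟨l, a⟩ x + f₁ (D.op ⟨l, b⟩ x) (D.op ⟨l, D.inv l a⟩ x) * f₂ ⟨l, b⟩ x) ∧
  (∀ (x : Σ l, G l) (l : Λ), f₁ x ⟨l, D.one l⟩ = 1) ∧
  (∀ (x : Σ l, G l) (l : Λ) (a b : G l),
    f₁ x ⟨l, D.mul l a b⟩ = f₁ (D.op x ⟨l, a⟩) ⟨l, b⟩ * f₁ x ⟨l, a⟩) ∧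
  (∀ (x : Σ l, G l) (l : Λ) (a b : G l),
    f₂ x ⟨l, D.mul l a b⟩ = f₁ (D.op x ⟨l, a⟩) ⟨l, b⟩ * f₂ x ⟨l, a⟩) ∧
  (∀ x y z : Σ l, G l, f₁ (D.op x y) z * f₁ x y = f₁ (D.op x z) (D.op y z) * f₁ x z) ∧
  (∀ x y z : Σ l, G l, f₁ (D.op x y) z * f₂ x y = f₂ (D.op x z) (D.op y z) * f₁ y z) ∧
  (∀ x y z : Σ l, G l, f₂ (D.op x y) z =
    f₁ (D.op x z) (D.op y z) * f₂ x z + f₂ (D.op x z) (D.op y z) * f₂ y z)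

/-- An MCQ homomorphism: `φ` preserves the operation `◁`, and for `a, b` in a common
component, `φ a`, `φ b` lie in a common component and `φ (ab) = (φ a)(φ b)`. -/
def IsMCQHom {Λ' : Type u'} {G' : Λ' → Type v'} (D : MCQData Λ G)
    (D' : MCQData Λ' G') (φ : (Σ l, G l) → (Σ l', G' l')) : Prop :=
  (∀ x y : Σ l, G l, φ (D.op x y) = D'.op (φ x) (φ y)) ∧
  (∀ (l : Λ) (a b : G l), ∃ (m : Λ') (a' b' : G' m),
    φ ⟨l, a⟩ = ⟨m, a'⟩ ∧ φ ⟨l, b⟩ = ⟨m, b'⟩ ∧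
    φ ⟨l, D.mul l a b⟩ = ⟨m, D'.mul m a' b'⟩)

/-- Conditions (0-i)--(0-iv) for the maps `f₃, f₄ : ⨆ (G l × G l) → R`. -/
def Conds0 (D : MCQData Λ G) {R : Type w} [Ring R]
    (f₃ f₄ : ∀ l : Λ, G l → G l → R) : Prop :=
  (∀ (l : Λ) (a b : G l), IsUnit (f₃ l a b) ∧ IsUnit (f₄ l a b)) ∧
  (∀ (l : Λ) (a b c : G l), f₃ l (D.mul l a b) c * f₃ l a b = f₃ l a (D.mul l b c)) ∧
  (∀ (l : Λ) (a b c : G l),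
    f₃ l (D.mul l a b) c * f₄ l a b = f₄ l a (D.mul l b c) * f₃ l b c) ∧
  (∀ (l : Λ) (a b c : G l), f₄ l (D.mul l a b) c = f₄ l a (D.mul l b c) * f₄ l b c)

/-- Conditions (0-i)--(4-iii) for the quadruple `(f₁, f₂, f₃, f₄)`.
In conditions (4-i)--(4-iii), the decompositions `a ◁ x = ⟨m, a'⟩` and
`b ◁ x = ⟨m, b'⟩` express that `a ◁ x` and `b ◁ x` lie in a common component `G m`. -/
def Conds (D : MCQData Λ G) {R : Type w} [Ring R]
    (f₁ f₂ : (Σ l, G l) → (Σ l, G l) → R) (f₃ f₄ : ∀ l : Λ, G l → G l → R) : Prop :=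
  Conds0 D f₃ f₄ ∧
  (∀ (l : Λ) (a b : G l),
    f₁ ⟨l, a⟩ ⟨l, b⟩ = f₄ l (D.inv l b) (D.mul l a b) * f₃ l a b) ∧
  (∀ (l : Λ) (a b : G l),
    f₂ ⟨l, a⟩ ⟨l, b⟩ =
      -(f₃ l (D.inv l b) (D.mul l a b) * f₄ l (D.inv l b) (D.one l) * f₃ l b (D.inv l b)) +
        f₄ l (D.inv l b) (D.mul l a b) * f₄ l a b) ∧
  (∀ (x : Σ l, G l) (l : Λ), f₁ x ⟨l, D.one l⟩ = 1) ∧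
  (∀ (x : Σ l, G l) (l : Λ) (a b : G l),
    f₁ x ⟨l, D.mul l a b⟩ = f₁ (D.op x ⟨l, a⟩) ⟨l, b⟩ * f₁ x ⟨l, a⟩) ∧
  (∀ (x : Σ l, G l) (l : Λ) (a b : G l),
    f₂ x ⟨l, D.mul l a b⟩ * f₃ l a b = f₁ (D.op x ⟨l, a⟩) ⟨l, b⟩ * f₂ x ⟨l, a⟩) ∧
  (∀ (x : Σ l, G l) (l : Λ) (a b : G l),
    f₂ x ⟨l, D.mul l a b⟩ * f₄ l a b = f₂ (D.op x ⟨l, a⟩) ⟨l, b⟩) ∧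
  (∀ x y z : Σ l, G l, f₁ (D.op x y) z * f₁ x y = f₁ (D.op x z) (D.op y z) * f₁ x z) ∧
  (∀ x y z : Σ l, G l, f₁ (D.op x y) z * f₂ x y = f₂ (D.op x z) (D.op y z) * f₁ y z) ∧
  (∀ x y z : Σ l, G l, f₂ (D.op x y) z =
    f₁ (D.op x z) (D.op y z) * f₂ x z + f₂ (D.op x z) (D.op y z) * f₂ y z) ∧
  (∀ (l : Λ) (a b : G l) (x : Σ l, G l) (m : Λ) (a' b' : G m),
    D.op ⟨l, a⟩ x = ⟨m, a'⟩ → D.op ⟨l, b⟩ x = ⟨m, b'⟩ →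
      f₁ ⟨l, D.mul l a b⟩ x * f₃ l a b = f₃ m a' b' * f₁ ⟨l, a⟩ x) ∧
  (∀ (l : Λ) (a b : G l) (x : Σ l, G l) (m : Λ) (a' b' : G m),
    D.op ⟨l, a⟩ x = ⟨m, a'⟩ → D.op ⟨l, b⟩ x = ⟨m, b'⟩ →
      f₁ ⟨l, D.mul l a b⟩ x * f₄ l a b = f₄ m a' b' * f₁ ⟨l, b⟩ x) ∧
  (∀ (l : Λ) (a b : G l) (x : Σ l, G l) (m : Λ) (a' b' : G m),
    D.op ⟨l, a⟩ x = ⟨m, a'⟩ → D.op ⟨l, b⟩ x = ⟨m, b'⟩ →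
      f₂ ⟨l, D.mul l a b⟩ x = f₃ m a' b' * f₂ ⟨l, a⟩ x + f₄ m a' b' * f₂ ⟨l, b⟩ x)

/-- The multiplication `(a,u)(b,v) = (ab, f₃(a,b)u + f₄(a,b)v)` on `G l × M`. -/
def quadMul (D : MCQData Λ G) {R : Type w} [Ring R] (f₃ f₄ : ∀ l : Λ, G l → G l → R)
    (M : Type x) [AddCommGroup M] [Module R M] (l : Λ) (p q : G l × M) : G l × M :=
  (D.mul l p.1 q.1, f₃ l p.1 q.1 • p.2 + f₄ l p.1 q.1 • q.2)

/-- The operation `(x,u) ◁ (y,v) = (x ◁ y, f₁(x,y)u + f₂(x,y)v)` on `⨆ (G l × M)`. -/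
def quadOp (D : MCQData Λ G) {R : Type w} [Ring R]
    (f₁ f₂ : (Σ l, G l) → (Σ l, G l) → R) (M : Type x) [AddCommGroup M] [Module R M]
    (z w : Σ l, G l × M) : Σ l, G l × M :=
  ⟨(D.op ⟨z.1, z.2.1⟩ ⟨w.1, w.2.1⟩).1,
    ((D.op ⟨z.1, z.2.1⟩ ⟨w.1, w.2.1⟩).2,
      f₁ ⟨z.1, z.2.1⟩ ⟨w.1, w.2.1⟩ • z.2.2 + f₂ ⟨z.1, z.2.1⟩ ⟨w.1, w.2.1⟩ • w.2.2)⟩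

/-- The data `X̃(f₁,f₂,f₃,f₄)` on `⨆ (G l × M)`. -/
def quadExt (D : MCQData Λ G) {R : Type w} [Ring R]
    (f₁ f₂ : (Σ l, G l) → (Σ l, G l) → R) (f₃ f₄ : ∀ l : Λ, G l → G l → R)
    (M : Type x) [AddCommGroup M] [Module R M] : MCQData Λ (fun l => G l × M) where
  mul := quadMul D f₃ f₄ M
  one l := (D.one l, 0)
  inv l p := (D.inv l p.1, -((f₄ l (D.inv l p.1) (D.one l) * f₃ l p.1 (D.inv l p.1)) • p.2))
  op := quadOp D f₁ f₂ M

/-- The multiplication `(a,u)(b,v) = (ab, u + f₁(a,a⁻¹)v)` on `G l × M`. -/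
def alexMul (D : MCQData Λ G) {R : Type w} [Ring R]
    (f₁ : (Σ l, G l) → (Σ l, G l) → R) (M : Type x) [AddCommGroup M] [Module R M]
    (l : Λ) (p q : G l × M) : G l × M :=
  (D.mul l p.1 q.1, p.2 + f₁ ⟨l, p.1⟩ ⟨l, D.inv l p.1⟩ • q.2)

/-- The data `X̃(f₁,f₂)` on `⨆ (G l × M)`, with identity `(e_l, 0)` and
inverse `(a,u)⁻¹ = (a⁻¹, -f₁(a,a)u)` on each component. -/
def alexExt (D : MCQData Λ G) {R : Type w} [Ring R]
    (f₁ f₂ : (Σ l, G l) → (Σ l, G l) → R) (M : Type x) [AddCommGroup M] [Module R M] :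
    MCQData Λ (fun l => G l × M) where
  mul := alexMul D f₁ M
  one l := (D.one l, 0)
  inv l p := (D.inv l p.1, -(f₁ ⟨l, p.1⟩ ⟨l, p.1⟩ • p.2))
  op := quadOp D f₁ f₂ M

/-- `(m, o, i)` satisfies the group axioms on `α`. -/
def GroupAxiomsOn {α : Type x} (m : α → α → α) (o : α) (i : α → α) : Prop :=
  (∀ a b c : α, m (m a b) c = m a (m b c)) ∧ (∀ a : α, m o a = a) ∧ (∀ a : α, m a o = a) ∧
  (∀ a : α, m (i a) a = o) ∧ (∀ a : α, m a (i a) = o)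

/-- The relation `(f₁,f₂,f₃,f₄) ∼ (g₁,g₂,g₃,g₄)`, witnessed by a map `h : X → Rˣ`. -/
def QuadRel (D : MCQData Λ G) {R : Type w} [Ring R]
    (f₁ f₂ g₁ g₂ : (Σ l, G l) → (Σ l, G l) → R)
    (f₃ f₄ g₃ g₄ : ∀ l : Λ, G l → G l → R) : Prop :=
  ∃ h : (Σ l, G l) → Rˣ,
    (∀ x y : Σ l, G l, (h (D.op x y) : R) * f₁ x y = g₁ x y * (h x : R)) ∧
    (∀ x y : Σ l, G l, (h (D.op x y) : R) * f₂ x y = g₂ x y * (h y : R)) ∧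
    (∀ (l : Λ) (a b : G l),
      (h ⟨l, D.mul l a b⟩ : R) * f₃ l a b = g₃ l a b * (h ⟨l, a⟩ : R)) ∧
    (∀ (l : Λ) (a b : G l),
      (h ⟨l, D.mul l a b⟩ : R) * f₄ l a b = g₄ l a b * (h ⟨l, b⟩ : R))

end MCQData

/-!
By (0-i) and (0-ii) the values `θ(a) = f₃(e, a)` are units with `θ(a)⁻¹ = f₃(a, a⁻¹)` and
`f₃(a, b) = θ(ab) θ(a)⁻¹`: each `f₃` is the coboundary of `θ`. Conjugating by this gauge,
`g₁(x, y) = θ(x ◁ y)⁻¹ f₁(x, y) θ(x)` and `g₂(x, y) = θ(x ◁ y)⁻¹ f₂(x, y) θ(y)`, absorbs `f₃`.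
Condition (4-i) with `a = e` shows that this `g₁` is `f₁(e_x, y)`, and the formula for `θ⁻¹`
shows that this `g₂` is the given one. Conjugation by any gauge preserves (3-i)–(3-iii); the
other conditions of an Alexander pair follow from (1-*), (2-*), (4-iii), (0-iii) and (0-iv)
once `f₃` has been absorbed.
-/

namespace MCQData

section Cocycle

variable {G : Type*} [Group G] {R : Type*} [Ring R]

def IsCocycle (f₃ : G → G → R) : Prop :=
  ∀ a b c, f₃ (a * b) c * f₃ a b = f₃ a (b * c)

variable {f₁ f₂ f₃ f₄ : G → G → R} {θ : G → Rˣ}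

theorem IsCocycle.coe_mul_eq (h0ii : IsCocycle f₃) (hθ : ∀ a, (θ a : R) = f₃ 1 a)
    (a b : G) : (θ (a * b) : R) = f₃ a b * θ a := by
  rw [hθ, hθ, ← h0ii 1 a b, one_mul]

theorem IsCocycle.inv_mul_eq (h0ii : IsCocycle f₃) (hθ : ∀ a, (θ a : R) = f₃ 1 a)
    (a b : G) : (↑(θ (a * b))⁻¹ : R) * f₃ a b = ↑(θ a)⁻¹ := by
  rw [Units.inv_mul_eq_iff_eq_mul, h0ii.coe_mul_eq hθ, mul_assoc, Units.mul_inv, mul_one]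

theorem IsCocycle.coe_inv_eq (h0ii : IsCocycle f₃) (hθ : ∀ a, (θ a : R) = f₃ 1 a)
    (a : G) : (↑(θ a)⁻¹ : R) = f₃ a a⁻¹ := by
  have h1 : f₃ a 1 = 1 :=
    (θ a).isUnit.mul_eq_right.mp (by rw [← h0ii.coe_mul_eq hθ, mul_one])
  apply Units.inv_eq_of_mul_eq_one_right
  simpa [hθ, h1] using h0ii a a⁻¹ a

theorem f₁_mul_add_f₂_mul_eq (h0ii : IsCocycle f₃) (hθ : ∀ a, (θ a : R) = f₃ 1 a)
    (h0iii : ∀ a b c, f₃ (a * b) c * f₄ a b = f₄ a (b * c) * f₃ b c)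
    (h0iv : ∀ a b c, f₄ (a * b) c = f₄ a (b * c) * f₄ b c)
    (h1i : ∀ a b, f₁ a b = f₄ b⁻¹ (a * b) * f₃ a b)
    (h1ii : ∀ a b, f₂ a b = -(f₃ b⁻¹ (a * b) * f₄ b⁻¹ 1 * f₃ b b⁻¹) + f₄ b⁻¹ (a * b) * f₄ a b)
    (a b : G) :
    f₁ a b * θ a + f₂ a b * θ b = f₁ a (a⁻¹ * b) * θ a := by
  have hf₁ : f₁ a b * θ a = f₃ b⁻¹ (a * b) * f₄ b⁻¹ 1 := by
    have h := h0iii b⁻¹ 1 (a * b)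
    rw [mul_one, one_mul] at h
    rw [h1i, mul_assoc, ← h0ii.coe_mul_eq hθ, hθ, h]
  have hf₂ :
      f₂ a b * θ b = -(f₃ b⁻¹ (a * b) * f₄ b⁻¹ 1) + f₄ b⁻¹ (a * b) * f₄ a b * θ b := by
    rw [h1ii, add_mul, neg_mul, mul_assoc _ (f₃ b b⁻¹), ← h0ii.coe_inv_eq hθ, Units.inv_mul,
      mul_one]
  have hf₁' : f₁ a (a⁻¹ * b) * θ a = f₄ b⁻¹ (a * b) * f₄ a b * θ b := by
    rw [h1i, mul_assoc, ← h0ii.coe_mul_eq hθ, mul_inv_cancel_left, ← h0iv, mul_inv_rev, inv_inv]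
  rw [hf₁, hf₂, hf₁', add_neg_cancel_left]

theorem inv_mul_f₄_eq (h0ii : IsCocycle f₃) (hθ : ∀ a, (θ a : R) = f₃ 1 a)
    (h0iii : ∀ a b c, f₃ (a * b) c * f₄ a b = f₄ a (b * c) * f₃ b c)
    (h1i : ∀ a b, f₁ a b = f₄ b⁻¹ (a * b) * f₃ a b) (a b : G) :
    (↑(θ (a * b))⁻¹ : R) * f₄ a b = ↑(θ (a * b * a⁻¹))⁻¹ * f₁ b a⁻¹ := by
  rw [Units.eq_inv_mul_iff_mul_eq, h0ii.coe_mul_eq hθ, mul_assoc, Units.mul_inv_cancel_left,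
    h0iii, h1i, inv_inv]

end Cocycle

section Gauge

variable {X : Type*} {R : Type*} [Ring R]

def gauge₁ (op : X → X → X) (θ : X → Rˣ) (f : X → X → R) (x y : X) : R :=
  ↑(θ (op x y))⁻¹ * f x y * θ x

def gauge₂ (op : X → X → X) (θ : X → Rˣ) (f : X → X → R) (x y : X) : R :=
  ↑(θ (op x y))⁻¹ * f x y * θ y

def IsDistribPair (op : X → X → X) (f₁ f₂ : X → X → R) : Prop :=
  (∀ x y z, f₁ (op x y) z * f₁ x y = f₁ (op x z) (op y z) * f₁ x z) ∧
  (∀ x y z, f₁ (op x y) z * f₂ x y = f₂ (op x z) (op y z) * f₁ y z) ∧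
  (∀ x y z,
    f₂ (op x y) z = f₁ (op x z) (op y z) * f₂ x z + f₂ (op x z) (op y z) * f₂ y z)

theorem IsDistribPair.gauge {op : X → X → X} {f₁ f₂ : X → X → R}
    (hdist : ∀ x y z, op (op x y) z = op (op x z) (op y z)) (h : IsDistribPair op f₁ f₂)
    (θ : X → Rˣ) : IsDistribPair op (gauge₁ op θ f₁) (gauge₂ op θ f₂) := by
  obtain ⟨h3i, h3ii, h3iii⟩ := h
  refine ⟨fun x y z => ?_, fun x y z => ?_, fun x y z => ?_⟩ <;>
    simp only [gauge₁, gauge₂, hdist x y z, mul_assoc, Units.mul_inv_cancel_left]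
  · rw [← mul_assoc (f₁ _ z), h3i, mul_assoc]
  · rw [← mul_assoc (f₁ _ z), h3ii, mul_assoc]
  · rw [h3iii, add_mul, mul_add, mul_assoc, mul_assoc]

end Gauge

section MCQ

variable {Λ : Type*} {G : Λ → Type*}

abbrev IsGroupData.group {D : MCQData Λ G} (h : D.IsGroupData) (l : Λ) : Group (G l) where
  mul := D.mul l
  one := D.one l
  inv := D.inv l
  mul_assoc := h.1 l
  one_mul := h.2.1 l
  mul_one := h.2.2.1 l
  inv_mul_cancel := h.2.2.2.1 l

variable [∀ l, Group (G l)] {R : Type*} [Ring R] {op : (Σ l, G l) → (Σ l, G l) → Σ l, G l}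
  {f₁ f₂ : (Σ l, G l) → (Σ l, G l) → R} {f₃ f₄ : ∀ l, G l → G l → R} {θ : (Σ l, G l) → Rˣ}

def OpRespectsMul (op : (Σ l, G l) → (Σ l, G l) → Σ l, G l) : Prop :=
  ∀ l (a b : G l) x, ∃ (m : Λ) (a' b' : G m),
    op ⟨l, a⟩ x = ⟨m, a'⟩ ∧ op ⟨l, b⟩ x = ⟨m, b'⟩ ∧ op ⟨l, a * b⟩ x = ⟨m, a' * b'⟩

theorem op_one_left (hop : OpRespectsMul op) (l : Λ) (a : G l) (y : Σ l, G l) :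
    op ⟨l, 1⟩ y = ⟨(op ⟨l, a⟩ y).1, 1⟩ := by
  obtain ⟨m, p, v, hp, hv, hpv⟩ := hop l 1 a y
  rw [one_mul, hv] at hpv
  rw [hp, hv, mul_eq_right.mp (sigma_mk_injective hpv).symm]

theorem op_inv_left (hop : OpRespectsMul op) {l : Λ} {a : G l} {y : Σ l, G l} {m : Λ}
    {c : G m} (h : op ⟨l, a⟩ y = ⟨m, c⟩) : op ⟨l, a⁻¹⟩ y = ⟨m, c⁻¹⟩ := by
  obtain ⟨m', c', v, hc, hv, hcv⟩ := hop l a a⁻¹ y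
  rw [h] at hc
  cases hc
  rw [mul_inv_cancel, op_one_left hop l a y, h] at hcv
  rw [hv, eq_inv_of_mul_eq_one_right (sigma_mk_injective hcv).symm]

theorem gauge₁_eq (hop : OpRespectsMul op) (hθ : ∀ l a, (θ ⟨l, a⟩ : R) = f₃ l 1 a)
    (h4i : ∀ l (a b : G l) x m (a' b' : G m), op ⟨l, a⟩ x = ⟨m, a'⟩ →
      op ⟨l, b⟩ x = ⟨m, b'⟩ → f₁ ⟨l, a * b⟩ x * f₃ l a b = f₃ m a' b' * f₁ ⟨l, a⟩ x)
    (x y : Σ l, G l) : gauge₁ op θ f₁ x y = f₁ ⟨x.1, 1⟩ y := by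
  obtain ⟨l, a⟩ := x
  rcases hc : op ⟨l, a⟩ y with ⟨m, c⟩
  have h := h4i l 1 a y m 1 c (by rw [op_one_left hop l a y, hc]) hc
  rw [one_mul, ← hθ, ← hθ] at h
  rw [gauge₁, hc, mul_assoc, h, Units.inv_mul_cancel_left]

theorem eq_gauge₂ (hop : OpRespectsMul op) (h0ii : ∀ l, IsCocycle (f₃ l))
    (hθ : ∀ l a, (θ ⟨l, a⟩ : R) = f₃ l 1 a) {g₂ : (Σ l, G l) → (Σ l, G l) → R}
    (hg₂ : ∀ l (a : G l) y m (c c' : G m), op ⟨l, a⟩ y = ⟨m, c⟩ →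
      op ⟨l, a⁻¹⟩ y = ⟨m, c'⟩ → g₂ ⟨l, a⟩ y = f₃ m c c' * f₂ ⟨l, a⟩ y * f₃ y.1 1 y.2)
    (x y : Σ l, G l) : g₂ x y = gauge₂ op θ f₂ x y := by
  obtain ⟨l, a⟩ := x
  rcases hc : op ⟨l, a⟩ y with ⟨m, c⟩
  rw [hg₂ l a y m c c⁻¹ hc (op_inv_left hop hc), gauge₂, hc, ← (h0ii m).coe_inv_eq (hθ m),
    ← hθ]

theorem gauge₁_add_gauge₂ (hconj : ∀ l (a b : G l), op ⟨l, a⟩ ⟨l, b⟩ = ⟨l, b⁻¹ * a * b⟩)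
    (h : ∀ l (a b : G l), f₁ ⟨l, a⟩ ⟨l, b⟩ * θ ⟨l, a⟩ + f₂ ⟨l, a⟩ ⟨l, b⟩ * θ ⟨l, b⟩ =
      f₁ ⟨l, a⟩ ⟨l, a⁻¹ * b⟩ * θ ⟨l, a⟩) (l : Λ) (a b : G l) :
    gauge₁ op θ f₁ ⟨l, a⟩ ⟨l, b⟩ + gauge₂ op θ f₂ ⟨l, a⟩ ⟨l, b⟩ =
      gauge₁ op θ f₁ ⟨l, a⟩ ⟨l, a⁻¹ * b⟩ := by
  have hc : op ⟨l, a⟩ ⟨l, a⁻¹ * b⟩ = op ⟨l, a⟩ ⟨l, b⟩ := by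
    rw [hconj, hconj]
    congr 1
    group
  rw [gauge₁, gauge₂, gauge₁, hc, mul_assoc, mul_assoc, mul_assoc, ← mul_add, h]

theorem gauge₂_mul_left (hop : OpRespectsMul op)
    (hconj : ∀ l (a b : G l), op ⟨l, a⟩ ⟨l, b⟩ = ⟨l, b⁻¹ * a * b⟩)
    (h0ii : ∀ l, IsCocycle (f₃ l)) (hθ : ∀ l a, (θ ⟨l, a⟩ : R) = f₃ l 1 a)
    (h0iii : ∀ l (a b c : G l), f₃ l (a * b) c * f₄ l a b = f₄ l a (b * c) * f₃ l b c)
    (h1i : ∀ l (a b : G l), f₁ ⟨l, a⟩ ⟨l, b⟩ = f₄ l b⁻¹ (a * b) * f₃ l a b)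
    (h4iii : ∀ l (a b : G l) x m (a' b' : G m), op ⟨l, a⟩ x = ⟨m, a'⟩ →
      op ⟨l, b⟩ x = ⟨m, b'⟩ →
        f₂ ⟨l, a * b⟩ x = f₃ m a' b' * f₂ ⟨l, a⟩ x + f₄ m a' b' * f₂ ⟨l, b⟩ x)
    (l : Λ) (a b : G l) (x : Σ l, G l) :
    gauge₂ op θ f₂ ⟨l, a * b⟩ x = gauge₂ op θ f₂ ⟨l, a⟩ x +
      gauge₁ op θ f₁ (op ⟨l, b⟩ x) (op ⟨l, a⁻¹⟩ x) * gauge₂ op θ f₂ ⟨l, b⟩ x := by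
  obtain ⟨m, a', b', ha, hb, hab⟩ := hop l a b x
  have hf₃ := (h0ii m).inv_mul_eq (hθ m) a' b'
  have hf₄ := inv_mul_f₄_eq (h0ii m) (hθ m) (h0iii m) (h1i m) a' b'
  simp only [gauge₁, gauge₂, ha, hb, hab, op_inv_left hop ha, hconj, inv_inv,
    h4iii l a b x m a' b' ha hb]
  rw [mul_add, add_mul, ← mul_assoc, hf₃, ← mul_assoc _ (f₄ m a' b'), hf₄]
  simp only [mul_assoc, Units.mul_inv_cancel_left]

theorem gauge₁_one_right (hone : ∀ x (l : Λ), op x ⟨l, 1⟩ = x)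
    (h2i : ∀ x (l : Λ), f₁ x ⟨l, 1⟩ = 1) (x : Σ l, G l) (l : Λ) :
    gauge₁ op θ f₁ x ⟨l, 1⟩ = 1 := by
  rw [gauge₁, hone, h2i, mul_one, Units.inv_mul]

theorem gauge₁_mul_right
    (hmul : ∀ x l (a b : G l), op x ⟨l, a * b⟩ = op (op x ⟨l, a⟩) ⟨l, b⟩)
    (h2ii : ∀ x l (a b : G l), f₁ x ⟨l, a * b⟩ = f₁ (op x ⟨l, a⟩) ⟨l, b⟩ * f₁ x ⟨l, a⟩)
    (x : Σ l, G l) (l : Λ) (a b : G l) :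
    gauge₁ op θ f₁ x ⟨l, a * b⟩ =
      gauge₁ op θ f₁ (op x ⟨l, a⟩) ⟨l, b⟩ * gauge₁ op θ f₁ x ⟨l, a⟩ := by
  simp only [gauge₁, hmul, h2ii, mul_assoc, Units.mul_inv_cancel_left]

theorem gauge₂_mul_right
    (hmul : ∀ x l (a b : G l), op x ⟨l, a * b⟩ = op (op x ⟨l, a⟩) ⟨l, b⟩)
    (h0ii : ∀ l, IsCocycle (f₃ l)) (hθ : ∀ l a, (θ ⟨l, a⟩ : R) = f₃ l 1 a)
    (h2iii : ∀ x l (a b : G l),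
      f₂ x ⟨l, a * b⟩ * f₃ l a b = f₁ (op x ⟨l, a⟩) ⟨l, b⟩ * f₂ x ⟨l, a⟩)
    (x : Σ l, G l) (l : Λ) (a b : G l) :
    gauge₂ op θ f₂ x ⟨l, a * b⟩ =
      gauge₁ op θ f₁ (op x ⟨l, a⟩) ⟨l, b⟩ * gauge₂ op θ f₂ x ⟨l, a⟩ := by
  simp only [gauge₁, gauge₂, hmul, (h0ii l).coe_mul_eq (hθ l), mul_assoc,
    Units.mul_inv_cancel_left]
  rw [← mul_assoc (f₂ _ _), h2iii, mul_assoc]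

end MCQ

end MCQData

open MCQData in
/-- if `(f₁,f₂,f₃,f₄)` satisfies conditions (0-i)--(4-iii), then the
pair `(g₁, g₂)` with `g₁(x,y) = f₁(e_x, y)` and
`g₂(x,y) = f₃(x ◁ y, x⁻¹ ◁ y) f₂(x,y) f₃(e_y, y)` is an MCQ Alexander pair.
Here `g₂` is characterized through the decompositions `x ◁ y = ⟨m, c⟩` and
`x⁻¹ ◁ y = ⟨m, c'⟩` in a common component `G m`. -/
theorem reduced_pair_is_alexander {Λ : Type u} {G : Λ → Type v} {R : Type w} [Ring R]
    (D : MCQData Λ G) (hD : D.IsMCQ)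
    (f₁ f₂ : (Σ l, G l) → (Σ l, G l) → R) (f₃ f₄ : ∀ l : Λ, G l → G l → R)
    (hc : MCQData.Conds D f₁ f₂ f₃ f₄)
    (g₂ : (Σ l, G l) → (Σ l, G l) → R)
    (hg₂ : ∀ (l : Λ) (a : G l) (y : Σ l, G l) (m : Λ) (c c' : G m),
      D.op ⟨l, a⟩ y = ⟨m, c⟩ → D.op ⟨l, D.inv l a⟩ y = ⟨m, c'⟩ →
        g₂ ⟨l, a⟩ y = f₃ m c c' * f₂ ⟨l, a⟩ y * f₃ y.1 (D.one y.1) y.2) :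
    D.IsMCQAlexanderPair (fun x y => f₁ ⟨x.1, D.one x.1⟩ y) g₂ := by
  obtain ⟨hG, hconj, hone, hmul, hdist, hop⟩ := hD
  obtain ⟨⟨hunit, h0ii, h0iii, h0iv⟩, h1i, h1ii, h2i, h2ii, h2iii, -, h3i, h3ii, h3iii, h4i, -,
    h4iii⟩ := hc
  let _ : ∀ l, Group (G l) := hG.group
  let θ : (Σ l, G l) → Rˣ := fun x => (hunit x.1 1 x.2).1.unit
  have hθ : ∀ l a, (θ ⟨l, a⟩ : R) = f₃ l 1 a := fun l a => (hunit l 1 a).1.unit_spec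
  have hg₁ : (fun x y => f₁ ⟨x.1, D.one x.1⟩ y) = gauge₁ D.op θ f₁ :=
    funext₂ fun x y => (gauge₁_eq hop hθ h4i x y).symm
  rw [hg₁, funext₂ (eq_gauge₂ hop h0ii hθ hg₂)]
  exact ⟨gauge₁_add_gauge₂ hconj fun l =>
      f₁_mul_add_f₂_mul_eq (h0ii l) (hθ l) (h0iii l) (h0iv l) (h1i l) (h1ii l),
    fun l a b x =>
      (gauge₁_eq hop hθ h4i ⟨l, a⟩ x).trans (gauge₁_eq hop hθ h4i ⟨l, b⟩ x).symm,
    gauge₂_mul_left hop hconj h0ii hθ h0iii h1i h4iii,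
    gauge₁_one_right hone h2i,
    gauge₁_mul_right hmul h2ii,
    gauge₂_mul_right hmul h0ii hθ h2iii,
    IsDistribPair.gauge hdist ⟨h3i, h3ii, h3iii⟩ θ⟩
end

section
/- Let X = ⨆_{λ∈Λ} G_λ be a multiple conjugation quandle, R a ring, and M a left R-module. For any quadruple (f₁,f₂,f₃,f₄) of maps f₁, f₂ : X × X → R, f₃, f₄ : ⨆_λ (G_λ × G_λ) → R satisfying conditions (0-i)–(4-iii), there exists an MCQ Alexander pair (g₁, g₂) of maps g₁, g₂ : X × X → R such that the MCQ X̃(f₁,f₂,f₃,f₄) is MCQ-isomorphic to the MCQ X̃(g₁,g₂). (One may take g₁(x,y) = f₁(e_x, y) and g₂(x,y) = f₃(x ◁ y, x⁻¹ ◁ y) f₂(x,y) f₃(e_y, y), with the isomorphism induced by h(x) = f₃(x, x⁻¹).) -/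
universe u v w x u' v'

/-!
Rescale the fibre over `a ∈ G_λ` by the unit `h(a) = f₃(a, a⁻¹)`: the bijection
`(a, u) ↦ (a, h(a) u)` carries `X̃(f₁,f₂,f₃,f₄)` to the extension with coefficients
`g₁(x,y) = h(x◁y) f₁(x,y) h(x)⁻¹`, `g₂(x,y) = h(x◁y) f₂(x,y) h(y)⁻¹`, `g₃ = 1` and
`g₄(a,b) = g₁(a,a⁻¹)`. The cocycle identities (0-ii), (0-iii) give `h(ab) f₃(a,b) = h(a)` and
`h(ab) f₄(a,b) = f₁(e,a⁻¹) h(b)`, and (4-i) gives `g₁(x,y) = f₁(e_x, y)`, so the target is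
`X̃(g₁,g₂)`. Transporting conditions (2)–(4) along `h` yields all Alexander-pair axioms except
`g₁(a,b) + g₂(a,b) = g₁(a, a⁻¹b)`, which reduces to `f₁(a,a) + f₂(a,a) = 1`, a consequence of
(0-ii)–(0-iv), (1-i) and (1-ii).
-/

namespace MCQData

variable {Λ : Type u} {G : Λ → Type v} {D : MCQData Λ G} {R : Type w} [Ring R]

namespace IsGroupData

abbrev group_s19 (hG : D.IsGroupData) (l : Λ) : Group (G l) where
  mul := D.mul l
  mul_assoc := hG.1 l
  one := D.one l
  one_mul := hG.2.1 l
  mul_one := hG.2.2.1 l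
  inv := D.inv l
  inv_mul_cancel := hG.2.2.2.1 l

theorem one_mul (hG : D.IsGroupData) {l : Λ} (a : G l) : D.mul l (D.one l) a = a :=
  hG.2.1 l a

theorem mul_one (hG : D.IsGroupData) {l : Λ} (a : G l) : D.mul l a (D.one l) = a :=
  hG.2.2.1 l a

theorem inv_mul_cancel (hG : D.IsGroupData) {l : Λ} (a : G l) :
    D.mul l (D.inv l a) a = D.one l :=
  hG.2.2.2.1 l a

theorem mul_inv_cancel (hG : D.IsGroupData) {l : Λ} (a : G l) :
    D.mul l a (D.inv l a) = D.one l :=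
  hG.2.2.2.2 l a

theorem mul_inv_cancel_left (hG : D.IsGroupData) {l : Λ} (a b : G l) :
    D.mul l a (D.mul l (D.inv l a) b) = b :=
  letI := hG.group_s19 l; _root_.mul_inv_cancel_left a b

theorem inv_mul_cancel_left (hG : D.IsGroupData) {l : Λ} (a b : G l) :
    D.mul l (D.inv l a) (D.mul l a b) = b :=
  letI := hG.group_s19 l; _root_.inv_mul_cancel_left a b

theorem mul_mul_inv_cancel (hG : D.IsGroupData) {l : Λ} (a b : G l) :
    D.mul l (D.mul l a b) (D.inv l b) = a :=
  letI := hG.group_s19 l; _root_.mul_inv_cancel_right a b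

theorem inv_inv (hG : D.IsGroupData) {l : Λ} (a : G l) : D.inv l (D.inv l a) = a :=
  letI := hG.group_s19 l; _root_.inv_inv a

theorem mul_inv_rev (hG : D.IsGroupData) {l : Λ} (a b : G l) :
    D.inv l (D.mul l a b) = D.mul l (D.inv l b) (D.inv l a) :=
  letI := hG.group_s19 l; _root_.mul_inv_rev a b

theorem eq_inv_of_mul_eq_one_right (hG : D.IsGroupData) {l : Λ} {a b : G l}
    (h : D.mul l a b = D.one l) : b = D.inv l a :=
  letI := hG.group_s19 l; _root_.eq_inv_of_mul_eq_one_right h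

theorem eq_one_of_mul_eq_left (hG : D.IsGroupData) {l : Λ} {a b : G l}
    (h : D.mul l a b = a) : b = D.one l :=
  letI := hG.group_s19 l; _root_.mul_eq_left.mp h

theorem mul_mul_inv_mul_self (hG : D.IsGroupData) {l : Λ} (a b : G l) :
    D.mul l b (D.inv l (D.mul l a b)) = D.inv l a := by
  rw [hG.mul_inv_rev, hG.mul_inv_cancel_left]

end IsGroupData

namespace IsMCQ

theorem isGroupData (hD : D.IsMCQ) : D.IsGroupData := hD.1

theorem op_mk_mk (hD : D.IsMCQ) {l : Λ} (a b : G l) :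
    D.op ⟨l, a⟩ ⟨l, b⟩ = ⟨l, D.mul l (D.mul l (D.inv l b) a) b⟩ :=
  hD.2.1 l a b

theorem op_one_right (hD : D.IsMCQ) (x : Σ l, G l) (l : Λ) : D.op x ⟨l, D.one l⟩ = x :=
  hD.2.2.1 x l

theorem op_mul_right (hD : D.IsMCQ) (x : Σ l, G l) {l : Λ} (a b : G l) :
    D.op x ⟨l, D.mul l a b⟩ = D.op (D.op x ⟨l, a⟩) ⟨l, b⟩ :=
  hD.2.2.2.1 x l a b

theorem op_self_distrib (hD : D.IsMCQ) (x y z : Σ l, G l) :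
    D.op (D.op x y) z = D.op (D.op x z) (D.op y z) :=
  hD.2.2.2.2.1 x y z

theorem exists_op_mul (hD : D.IsMCQ) {l : Λ} (a b : G l) (x : Σ l, G l) :
    ∃ (m : Λ) (a' b' : G m), D.op ⟨l, a⟩ x = ⟨m, a'⟩ ∧ D.op ⟨l, b⟩ x = ⟨m, b'⟩ ∧
      D.op ⟨l, D.mul l a b⟩ x = ⟨m, D.mul m a' b'⟩ :=
  hD.2.2.2.2.2 l a b x

theorem exists_op_mul_of_op_eq (hD : D.IsMCQ) {l m : Λ} {a : G l} {x : Σ l, G l} {a' : G m}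
    (hx : D.op ⟨l, a⟩ x = ⟨m, a'⟩) (b : G l) :
    ∃ b' : G m, D.op ⟨l, b⟩ x = ⟨m, b'⟩ ∧ D.op ⟨l, D.mul l a b⟩ x = ⟨m, D.mul m a' b'⟩ := by
  obtain ⟨m₁, a₁, b₁, ha, hb, hab⟩ := hD.exists_op_mul a b x
  obtain ⟨rfl, ha'⟩ := Sigma.mk.inj_iff.mp (hx.symm.trans ha)
  cases eq_of_heq ha'
  exact ⟨b₁, hb, hab⟩

theorem op_one_left_of_op_eq (hD : D.IsMCQ) {l m : Λ} {a : G l} {x : Σ l, G l} {a' : G m}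
    (hx : D.op ⟨l, a⟩ x = ⟨m, a'⟩) : D.op ⟨l, D.one l⟩ x = ⟨m, D.one m⟩ := by
  obtain ⟨e', he, hae⟩ := hD.exists_op_mul_of_op_eq hx (D.one l)
  rw [hD.isGroupData.mul_one, hx] at hae
  rw [he, hD.isGroupData.eq_one_of_mul_eq_left (sigma_mk_injective hae).symm]

theorem op_inv_left_of_op_eq (hD : D.IsMCQ) {l m : Λ} {a : G l} {x : Σ l, G l} {a' : G m}
    (hx : D.op ⟨l, a⟩ x = ⟨m, a'⟩) : D.op ⟨l, D.inv l a⟩ x = ⟨m, D.inv m a'⟩ := by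
  obtain ⟨b', hb, hab⟩ := hD.exists_op_mul_of_op_eq hx (D.inv l a)
  rw [hD.isGroupData.mul_inv_cancel, hD.op_one_left_of_op_eq hx] at hab
  rw [hb, hD.isGroupData.eq_inv_of_mul_eq_one_right (sigma_mk_injective hab).symm]

theorem op_self (hD : D.IsMCQ) {l : Λ} (a : G l) : D.op ⟨l, a⟩ ⟨l, a⟩ = ⟨l, a⟩ := by
  rw [hD.op_mk_mk, hD.isGroupData.inv_mul_cancel, hD.isGroupData.one_mul]

end IsMCQ

namespace Conds0

variable {f₃ f₄ : ∀ l : Λ, G l → G l → R}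

theorem isUnit_f₃ (hc : D.Conds0 f₃ f₄) {l : Λ} (a b : G l) : IsUnit (f₃ l a b) :=
  (hc.1 l a b).1

theorem isUnit_f₄ (hc : D.Conds0 f₃ f₄) {l : Λ} (a b : G l) : IsUnit (f₄ l a b) :=
  (hc.1 l a b).2

theorem f₃_cocycle (hc : D.Conds0 f₃ f₄) {l : Λ} (a b c : G l) :
    f₃ l (D.mul l a b) c * f₃ l a b = f₃ l a (D.mul l b c) :=
  hc.2.1 l a b c

theorem f₃_f₄_cocycle (hc : D.Conds0 f₃ f₄) {l : Λ} (a b c : G l) :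
    f₃ l (D.mul l a b) c * f₄ l a b = f₄ l a (D.mul l b c) * f₃ l b c :=
  hc.2.2.1 l a b c

theorem f₄_cocycle (hc : D.Conds0 f₃ f₄) {l : Λ} (a b c : G l) :
    f₄ l (D.mul l a b) c = f₄ l a (D.mul l b c) * f₄ l b c :=
  hc.2.2.2 l a b c

theorem f₃_one_right (hc : D.Conds0 f₃ f₄) (hG : D.IsGroupData) {l : Λ} (a : G l) :
    f₃ l a (D.one l) = 1 := by
  have h := hc.f₃_cocycle a (D.one l) (D.one l)
  rw [hG.mul_one, hG.mul_one] at h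
  exact (hc.isUnit_f₃ a _).mul_eq_left.mp h

theorem f₄_one_one (hc : D.Conds0 f₃ f₄) (hG : D.IsGroupData) (l : Λ) :
    f₄ l (D.one l) (D.one l) = 1 := by
  have h := hc.f₄_cocycle (D.one l) (D.one l) (D.one l)
  rw [hG.mul_one] at h
  exact (hc.isUnit_f₄ _ _).mul_eq_left.mp h.symm

theorem f₃_mul_inv_mul_f₃ (hc : D.Conds0 f₃ f₄) (hG : D.IsGroupData) {l : Λ} (a b : G l) :
    f₃ l (D.mul l a b) (D.inv l (D.mul l a b)) * f₃ l a b = f₃ l a (D.inv l a) := by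
  rw [hc.f₃_cocycle, hG.mul_mul_inv_mul_self]

theorem f₃_mul_inv_mul_f₄ (hc : D.Conds0 f₃ f₄) (hG : D.IsGroupData) {l : Λ} (a b : G l) :
    f₃ l (D.mul l a b) (D.inv l (D.mul l a b)) * f₄ l a b =
      f₄ l a (D.inv l a) * f₃ l (D.one l) (D.inv l a) * f₃ l b (D.inv l b) := by
  have h := hc.f₃_cocycle b (D.inv l b) (D.inv l a)
  rw [hG.mul_inv_cancel, ← hG.mul_inv_rev] at h
  rw [hc.f₃_f₄_cocycle, hG.mul_mul_inv_mul_self, mul_assoc, h]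

end Conds0

namespace Conds

variable {f₁ f₂ : (Σ l, G l) → (Σ l, G l) → R} {f₃ f₄ : ∀ l : Λ, G l → G l → R}

theorem conds0 (hc : D.Conds f₁ f₂ f₃ f₄) : D.Conds0 f₃ f₄ := hc.1

theorem f₁_mk_mk (hc : D.Conds f₁ f₂ f₃ f₄) {l : Λ} (a b : G l) :
    f₁ ⟨l, a⟩ ⟨l, b⟩ = f₄ l (D.inv l b) (D.mul l a b) * f₃ l a b :=
  hc.2.1 l a b

theorem f₂_mk_mk (hc : D.Conds f₁ f₂ f₃ f₄) {l : Λ} (a b : G l) :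
    f₂ ⟨l, a⟩ ⟨l, b⟩ =
      -(f₃ l (D.inv l b) (D.mul l a b) * f₄ l (D.inv l b) (D.one l) * f₃ l b (D.inv l b)) +
        f₄ l (D.inv l b) (D.mul l a b) * f₄ l a b :=
  hc.2.2.1 l a b

theorem f₁_one_right (hc : D.Conds f₁ f₂ f₃ f₄) (x : Σ l, G l) (l : Λ) :
    f₁ x ⟨l, D.one l⟩ = 1 :=
  hc.2.2.2.1 x l

theorem f₁_mul_right (hc : D.Conds f₁ f₂ f₃ f₄) (x : Σ l, G l) {l : Λ} (a b : G l) :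
    f₁ x ⟨l, D.mul l a b⟩ = f₁ (D.op x ⟨l, a⟩) ⟨l, b⟩ * f₁ x ⟨l, a⟩ :=
  hc.2.2.2.2.1 x l a b

theorem f₂_mul_right (hc : D.Conds f₁ f₂ f₃ f₄) (x : Σ l, G l) {l : Λ} (a b : G l) :
    f₂ x ⟨l, D.mul l a b⟩ * f₃ l a b = f₁ (D.op x ⟨l, a⟩) ⟨l, b⟩ * f₂ x ⟨l, a⟩ :=
  hc.2.2.2.2.2.1 x l a b

theorem f₁_self_distrib (hc : D.Conds f₁ f₂ f₃ f₄) (x y z : Σ l, G l) :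
    f₁ (D.op x y) z * f₁ x y = f₁ (D.op x z) (D.op y z) * f₁ x z :=
  hc.2.2.2.2.2.2.2.1 x y z

theorem f₁_f₂_self_distrib (hc : D.Conds f₁ f₂ f₃ f₄) (x y z : Σ l, G l) :
    f₁ (D.op x y) z * f₂ x y = f₂ (D.op x z) (D.op y z) * f₁ y z :=
  hc.2.2.2.2.2.2.2.2.1 x y z

theorem f₂_self_distrib (hc : D.Conds f₁ f₂ f₃ f₄) (x y z : Σ l, G l) :
    f₂ (D.op x y) z = f₁ (D.op x z) (D.op y z) * f₂ x z + f₂ (D.op x z) (D.op y z) * f₂ y z :=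
  hc.2.2.2.2.2.2.2.2.2.1 x y z

theorem f₁_mul_left (hc : D.Conds f₁ f₂ f₃ f₄) {l m : Λ} (a b : G l) (x : Σ l, G l)
    {a' b' : G m} (ha : D.op ⟨l, a⟩ x = ⟨m, a'⟩) (hb : D.op ⟨l, b⟩ x = ⟨m, b'⟩) :
    f₁ ⟨l, D.mul l a b⟩ x * f₃ l a b = f₃ m a' b' * f₁ ⟨l, a⟩ x :=
  hc.2.2.2.2.2.2.2.2.2.2.1 l a b x m a' b' ha hb

theorem f₂_mul_left (hc : D.Conds f₁ f₂ f₃ f₄) {l m : Λ} (a b : G l) (x : Σ l, G l)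
    {a' b' : G m} (ha : D.op ⟨l, a⟩ x = ⟨m, a'⟩) (hb : D.op ⟨l, b⟩ x = ⟨m, b'⟩) :
    f₂ ⟨l, D.mul l a b⟩ x = f₃ m a' b' * f₂ ⟨l, a⟩ x + f₄ m a' b' * f₂ ⟨l, b⟩ x :=
  hc.2.2.2.2.2.2.2.2.2.2.2.2 l a b x m a' b' ha hb

theorem f₁_add_f₂_self (hc : D.Conds f₁ f₂ f₃ f₄) (hG : D.IsGroupData) {l : Λ} (a : G l) :
    f₁ ⟨l, a⟩ ⟨l, a⟩ + f₂ ⟨l, a⟩ ⟨l, a⟩ = 1 := by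
  have h0 := hc.conds0
  set ai := D.inv l a
  have c₁ : f₃ l a ai * f₃ l ai (D.mul l a a) = f₃ l ai a := by
    have h := h0.f₃_cocycle ai (D.mul l a a) ai
    rwa [hG.inv_mul_cancel_left, hG.mul_mul_inv_cancel] at h
  have c₂ : f₃ l a ai * f₄ l ai (D.mul l a a) = f₄ l ai a * f₃ l (D.mul l a a) ai := by
    have h := h0.f₃_f₄_cocycle ai (D.mul l a a) ai
    rwa [hG.inv_mul_cancel_left, hG.mul_mul_inv_cancel] at h
  have c₃ : f₃ l (D.mul l a a) ai * f₄ l a a = f₄ l a (D.one l) * f₃ l a ai := by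
    rw [h0.f₃_f₄_cocycle, hG.mul_inv_cancel]
  have c₄ : f₄ l ai (D.one l) * f₃ l a ai = f₃ l (D.one l) ai * f₄ l ai a := by
    have h := h0.f₃_f₄_cocycle ai a ai
    rw [hG.inv_mul_cancel, hG.mul_inv_cancel] at h
    exact h.symm
  have c₅ : f₃ l ai a * f₃ l (D.one l) ai = 1 := by
    have h := h0.f₃_cocycle (D.one l) ai a
    rwa [hG.one_mul, hG.inv_mul_cancel, h0.f₃_one_right hG] at h
  have c₆ : f₄ l ai a * f₄ l a (D.one l) = 1 := by
    have h := h0.f₄_cocycle ai a (D.one l)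
    rw [hG.inv_mul_cancel, hG.mul_one, h0.f₄_one_one hG] at h
    exact h.symm
  have c₇ : f₃ l (D.mul l a a) ai * f₃ l a a = 1 := by
    rw [h0.f₃_cocycle, hG.mul_inv_cancel, h0.f₃_one_right hG]
  have hf₁ : f₃ l a ai * f₁ ⟨l, a⟩ ⟨l, a⟩ = f₄ l ai a := by
    rw [hc.f₁_mk_mk, ← mul_assoc, c₂, mul_assoc, c₇, mul_one]
  have hf₂ : f₃ l a ai * f₂ ⟨l, a⟩ ⟨l, a⟩ = -f₄ l ai a + f₃ l a ai := by
    rw [hc.f₂_mk_mk, mul_add, mul_neg, ← mul_assoc, ← mul_assoc, ← mul_assoc, c₁, mul_assoc,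
      c₄, ← mul_assoc, c₅, one_mul, c₂, mul_assoc, c₃, ← mul_assoc, c₆, one_mul]
  refine (h0.isUnit_f₃ a ai).mul_left_cancel ?_
  rw [mul_add, hf₁, hf₂, add_neg_cancel_left, mul_one]

theorem f₃_inv_mul_f₁_of_op_eq (hc : D.Conds f₁ f₂ f₃ f₄) (hD : D.IsMCQ) {l m : Λ} {a : G l}
    {x : Σ l, G l} {a' : G m} (hx : D.op ⟨l, a⟩ x = ⟨m, a'⟩) :
    f₃ m a' (D.inv m a') * f₁ ⟨l, a⟩ x = f₁ ⟨l, D.one l⟩ x * f₃ l a (D.inv l a) := by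
  rw [← hc.f₁_mul_left a (D.inv l a) x hx (hD.op_inv_left_of_op_eq hx),
    hD.isGroupData.mul_inv_cancel]

end Conds

variable {f₁ f₂ g₁ g₂ : (Σ l, G l) → (Σ l, G l) → R} {f₃ f₄ : ∀ l : Λ, G l → G l → R}

/-- The relation `(f₁,f₂,f₃,f₄) ∼ (g₁,g₂,1,g₁(a,a⁻¹))`; the right-hand quadruple defines the
same operations as `X̃(g₁,g₂)`. -/
def QuadRelPair (D : MCQData Λ G) (f₁ f₂ : (Σ l, G l) → (Σ l, G l) → R)
    (f₃ f₄ : ∀ l : Λ, G l → G l → R) (g₁ g₂ : (Σ l, G l) → (Σ l, G l) → R) : Prop :=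
  D.QuadRel f₁ f₂ g₁ g₂ f₃ f₄ (fun _ _ _ => 1) (fun l a _ => g₁ ⟨l, a⟩ ⟨l, D.inv l a⟩)

namespace QuadRelPair

theorem exists_bijective_isMCQHom (hrel : D.QuadRelPair f₁ f₂ f₃ f₄ g₁ g₂)
    (M : Type x) [AddCommGroup M] [Module R M] :
    ∃ φ : (Σ l, G l × M) → (Σ l, G l × M),
      IsMCQHom (quadExt D f₁ f₂ f₃ f₄ M) (alexExt D g₁ g₂ M) φ ∧ Function.Bijective φ := by
  obtain ⟨h, h₁, h₂, h₃, h₄⟩ := hrel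
  refine ⟨fun z => ⟨z.1, (z.2.1, h ⟨z.1, z.2.1⟩ • z.2.2)⟩, ⟨?_, ?_⟩, ?_⟩
  · rintro ⟨l, a, u⟩ ⟨m, b, v⟩
    simp only [quadExt, alexExt, quadOp, Sigma.eta, Units.smul_def, smul_add, smul_smul, h₁, h₂]
  · intro l p q
    refine ⟨l, _, _, rfl, rfl, ?_⟩
    simp only [quadExt, alexExt, quadMul, alexMul, Units.smul_def, smul_add, smul_smul, h₃, h₄,
      one_mul]
  · refine Function.bijective_iff_has_inverse.mpr
      ⟨fun z => ⟨z.1, (z.2.1, (h ⟨z.1, z.2.1⟩)⁻¹ • z.2.2)⟩, fun z => ?_, fun z => ?_⟩ <;> simp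

theorem g₁_mk_mul_left (hrel : D.QuadRelPair f₁ f₂ f₃ f₄ g₁ g₂) (hD : D.IsMCQ)
    (hc : D.Conds f₁ f₂ f₃ f₄) {l : Λ} (a b : G l) (x : Σ l, G l) :
    g₁ ⟨l, D.mul l a b⟩ x = g₁ ⟨l, a⟩ x := by
  obtain ⟨h, h₁, -, h₃, -⟩ := hrel
  obtain ⟨m, a', b', ha, hb, hab⟩ := hD.exists_op_mul a b x
  refine (Units.mul_left_inj (h ⟨l, a⟩)).mp ?_
  calc g₁ ⟨l, D.mul l a b⟩ x * h ⟨l, a⟩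
      = g₁ ⟨l, D.mul l a b⟩ x * h ⟨l, D.mul l a b⟩ * f₃ l a b := by
        rw [mul_assoc, h₃, one_mul]
    _ = h ⟨m, D.mul m a' b'⟩ * f₃ m a' b' * f₁ ⟨l, a⟩ x := by
        rw [← h₁, mul_assoc, hc.f₁_mul_left a b x ha hb, ← mul_assoc, hab]
    _ = g₁ ⟨l, a⟩ x * h ⟨l, a⟩ := by rw [h₃, one_mul, ← ha, h₁]

theorem g₁_mk_left (hrel : D.QuadRelPair f₁ f₂ f₃ f₄ g₁ g₂) (hD : D.IsMCQ)
    (hc : D.Conds f₁ f₂ f₃ f₄) {l : Λ} (a b : G l) (x : Σ l, G l) :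
    g₁ ⟨l, a⟩ x = g₁ ⟨l, b⟩ x := by
  rw [← hrel.g₁_mk_mul_left hD hc a (D.mul l (D.inv l a) b),
    hD.isGroupData.mul_inv_cancel_left]

theorem g₁_one_right (hrel : D.QuadRelPair f₁ f₂ f₃ f₄ g₁ g₂) (hD : D.IsMCQ)
    (hc : D.Conds f₁ f₂ f₃ f₄) (x : Σ l, G l) (l : Λ) : g₁ x ⟨l, D.one l⟩ = 1 := by
  obtain ⟨h, h₁, -⟩ := hrel
  refine (Units.mul_left_inj (h x)).mp ?_
  rw [← h₁, hD.op_one_right, hc.f₁_one_right, mul_one, one_mul]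

theorem g₁_mul_right (hrel : D.QuadRelPair f₁ f₂ f₃ f₄ g₁ g₂) (hD : D.IsMCQ)
    (hc : D.Conds f₁ f₂ f₃ f₄) (x : Σ l, G l) {l : Λ} (a b : G l) :
    g₁ x ⟨l, D.mul l a b⟩ = g₁ (D.op x ⟨l, a⟩) ⟨l, b⟩ * g₁ x ⟨l, a⟩ := by
  obtain ⟨h, h₁, -⟩ := hrel
  refine (Units.mul_left_inj (h x)).mp ?_
  calc g₁ x ⟨l, D.mul l a b⟩ * h x
      = h (D.op (D.op x ⟨l, a⟩) ⟨l, b⟩) * f₁ (D.op x ⟨l, a⟩) ⟨l, b⟩ * f₁ x ⟨l, a⟩ := by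
        rw [← h₁, hc.f₁_mul_right, hD.op_mul_right, mul_assoc]
    _ = g₁ (D.op x ⟨l, a⟩) ⟨l, b⟩ * g₁ x ⟨l, a⟩ * h x := by
        rw [h₁, mul_assoc, h₁, mul_assoc]

theorem g₂_mul_right (hrel : D.QuadRelPair f₁ f₂ f₃ f₄ g₁ g₂) (hD : D.IsMCQ)
    (hc : D.Conds f₁ f₂ f₃ f₄) (x : Σ l, G l) {l : Λ} (a b : G l) :
    g₂ x ⟨l, D.mul l a b⟩ = g₁ (D.op x ⟨l, a⟩) ⟨l, b⟩ * g₂ x ⟨l, a⟩ := by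
  obtain ⟨h, h₁, h₂, h₃, -⟩ := hrel
  refine (Units.mul_left_inj (h ⟨l, a⟩)).mp ?_
  calc g₂ x ⟨l, D.mul l a b⟩ * h ⟨l, a⟩
      = h (D.op x ⟨l, D.mul l a b⟩) * (f₂ x ⟨l, D.mul l a b⟩ * f₃ l a b) := by
        rw [← mul_assoc, h₂, mul_assoc, h₃, one_mul]
    _ = h (D.op (D.op x ⟨l, a⟩) ⟨l, b⟩) * f₁ (D.op x ⟨l, a⟩) ⟨l, b⟩ * f₂ x ⟨l, a⟩ := by
        rw [hc.f₂_mul_right, hD.op_mul_right, mul_assoc]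
    _ = g₁ (D.op x ⟨l, a⟩) ⟨l, b⟩ * g₂ x ⟨l, a⟩ * h ⟨l, a⟩ := by
        rw [h₁, mul_assoc, h₂, mul_assoc]

theorem g₁_self_distrib (hrel : D.QuadRelPair f₁ f₂ f₃ f₄ g₁ g₂) (hD : D.IsMCQ)
    (hc : D.Conds f₁ f₂ f₃ f₄) (x y z : Σ l, G l) :
    g₁ (D.op x y) z * g₁ x y = g₁ (D.op x z) (D.op y z) * g₁ x z := by
  obtain ⟨h, h₁, -⟩ := hrel
  refine (Units.mul_left_inj (h x)).mp ?_
  calc g₁ (D.op x y) z * g₁ x y * h x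
      = h (D.op (D.op x y) z) * (f₁ (D.op x y) z * f₁ x y) := by
        rw [mul_assoc, ← h₁, ← mul_assoc, ← h₁, mul_assoc]
    _ = h (D.op (D.op x z) (D.op y z)) * (f₁ (D.op x z) (D.op y z) * f₁ x z) := by
        rw [hc.f₁_self_distrib, hD.op_self_distrib]
    _ = g₁ (D.op x z) (D.op y z) * g₁ x z * h x := by
        rw [← mul_assoc, h₁, mul_assoc, h₁, ← mul_assoc]

theorem g₁_g₂_self_distrib (hrel : D.QuadRelPair f₁ f₂ f₃ f₄ g₁ g₂) (hD : D.IsMCQ)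
    (hc : D.Conds f₁ f₂ f₃ f₄) (x y z : Σ l, G l) :
    g₁ (D.op x y) z * g₂ x y = g₂ (D.op x z) (D.op y z) * g₁ y z := by
  obtain ⟨h, h₁, h₂, -⟩ := hrel
  refine (Units.mul_left_inj (h y)).mp ?_
  calc g₁ (D.op x y) z * g₂ x y * h y
      = h (D.op (D.op x y) z) * (f₁ (D.op x y) z * f₂ x y) := by
        rw [mul_assoc, ← h₂, ← mul_assoc, ← h₁, mul_assoc]
    _ = h (D.op (D.op x z) (D.op y z)) * (f₂ (D.op x z) (D.op y z) * f₁ y z) := by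
        rw [hc.f₁_f₂_self_distrib, hD.op_self_distrib]
    _ = g₂ (D.op x z) (D.op y z) * g₁ y z * h y := by
        rw [← mul_assoc, h₂, mul_assoc, h₁, ← mul_assoc]

theorem g₂_self_distrib (hrel : D.QuadRelPair f₁ f₂ f₃ f₄ g₁ g₂) (hD : D.IsMCQ)
    (hc : D.Conds f₁ f₂ f₃ f₄) (x y z : Σ l, G l) :
    g₂ (D.op x y) z = g₁ (D.op x z) (D.op y z) * g₂ x z + g₂ (D.op x z) (D.op y z) * g₂ y z := by
  obtain ⟨h, h₁, h₂, -⟩ := hrel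
  refine (Units.mul_left_inj (h z)).mp ?_
  calc g₂ (D.op x y) z * h z
      = h (D.op (D.op x z) (D.op y z)) *
          (f₁ (D.op x z) (D.op y z) * f₂ x z + f₂ (D.op x z) (D.op y z) * f₂ y z) := by
        rw [← h₂, hc.f₂_self_distrib, hD.op_self_distrib]
    _ = g₁ (D.op x z) (D.op y z) * (h (D.op x z) * f₂ x z) +
          g₂ (D.op x z) (D.op y z) * (h (D.op y z) * f₂ y z) := by
        rw [mul_add, ← mul_assoc, ← mul_assoc, h₁, h₂, mul_assoc, mul_assoc]
    _ = (g₁ (D.op x z) (D.op y z) * g₂ x z + g₂ (D.op x z) (D.op y z) * g₂ y z) * h z := by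
        rw [h₂, h₂, add_mul, mul_assoc, mul_assoc]

theorem g₂_mk_mul_left (hrel : D.QuadRelPair f₁ f₂ f₃ f₄ g₁ g₂) (hD : D.IsMCQ)
    (hc : D.Conds f₁ f₂ f₃ f₄) {l : Λ} (a b : G l) (x : Σ l, G l) :
    g₂ ⟨l, D.mul l a b⟩ x =
      g₂ ⟨l, a⟩ x + g₁ (D.op ⟨l, b⟩ x) (D.op ⟨l, D.inv l a⟩ x) * g₂ ⟨l, b⟩ x := by
  obtain ⟨m, a', b', ha, hb, hab⟩ := hD.exists_op_mul a b x
  have g₁_eq := hrel.g₁_mk_left hD hc a' b' ⟨m, D.inv m a'⟩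
  obtain ⟨h, -, h₂, h₃, h₄⟩ := hrel
  refine (Units.mul_left_inj (h x)).mp ?_
  calc g₂ ⟨l, D.mul l a b⟩ x * h x
      = h ⟨m, D.mul m a' b'⟩ * (f₃ m a' b' * f₂ ⟨l, a⟩ x + f₄ m a' b' * f₂ ⟨l, b⟩ x) := by
        rw [← h₂, hab, hc.f₂_mul_left a b x ha hb]
    _ = h ⟨m, a'⟩ * f₂ ⟨l, a⟩ x + g₁ ⟨m, a'⟩ ⟨m, D.inv m a'⟩ * (h ⟨m, b'⟩ * f₂ ⟨l, b⟩ x) := by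
        rw [mul_add, ← mul_assoc, ← mul_assoc, h₃, h₄, one_mul, mul_assoc]
    _ = (g₂ ⟨l, a⟩ x + g₁ (D.op ⟨l, b⟩ x) (D.op ⟨l, D.inv l a⟩ x) * g₂ ⟨l, b⟩ x) * h x := by
        rw [g₁_eq, ← hD.op_inv_left_of_op_eq ha, ← ha, ← hb, h₂, h₂, add_mul, mul_assoc]

theorem g₁_add_g₂_mk_mk (hrel : D.QuadRelPair f₁ f₂ f₃ f₄ g₁ g₂) (hD : D.IsMCQ)
    (hc : D.Conds f₁ f₂ f₃ f₄) {l : Λ} (a b : G l) :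
    g₁ ⟨l, a⟩ ⟨l, b⟩ + g₂ ⟨l, a⟩ ⟨l, b⟩ = g₁ ⟨l, a⟩ ⟨l, D.mul l (D.inv l a) b⟩ := by
  have g₁_add_g₂_self : g₁ ⟨l, a⟩ ⟨l, a⟩ + g₂ ⟨l, a⟩ ⟨l, a⟩ = 1 := by
    obtain ⟨h, h₁, h₂, -⟩ := hrel
    refine (Units.mul_left_inj (h ⟨l, a⟩)).mp ?_
    rw [add_mul, ← h₁, ← h₂, ← mul_add, hc.f₁_add_f₂_self hD.isGroupData, hD.op_self, mul_one,
      one_mul]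
  obtain ⟨c, rfl⟩ : ∃ c, b = D.mul l a c := ⟨_, (hD.isGroupData.mul_inv_cancel_left a b).symm⟩
  rw [hD.isGroupData.inv_mul_cancel_left, hrel.g₁_mul_right hD hc, hrel.g₂_mul_right hD hc,
    hD.op_self, ← mul_add, g₁_add_g₂_self, mul_one]

theorem isMCQAlexanderPair (hrel : D.QuadRelPair f₁ f₂ f₃ f₄ g₁ g₂) (hD : D.IsMCQ)
    (hc : D.Conds f₁ f₂ f₃ f₄) : D.IsMCQAlexanderPair g₁ g₂ :=
  ⟨fun _ => hrel.g₁_add_g₂_mk_mk hD hc, fun _ => hrel.g₁_mk_left hD hc,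
    fun _ => hrel.g₂_mk_mul_left hD hc, hrel.g₁_one_right hD hc,
    fun x _ => hrel.g₁_mul_right hD hc x, fun x _ => hrel.g₂_mul_right hD hc x,
    hrel.g₁_self_distrib hD hc, hrel.g₁_g₂_self_distrib hD hc, hrel.g₂_self_distrib hD hc⟩

end QuadRelPair

theorem Conds.exists_quadRelPair (hc : D.Conds f₁ f₂ f₃ f₄) (hD : D.IsMCQ) :
    ∃ g₁ g₂, D.QuadRelPair f₁ f₂ f₃ f₄ g₁ g₂ := by
  have hG := hD.isGroupData
  choose h hh using fun x : Σ l, G l => hc.conds0.isUnit_f₃ x.2 (D.inv x.1 x.2)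
  refine ⟨fun x y => f₁ ⟨x.1, D.one x.1⟩ y, fun x y => h (D.op x y) * f₂ x y * ↑(h y)⁻¹, h,
    ?_, fun x y => (Units.inv_mul_cancel_right _ _).symm, fun l a b => ?_, fun l a b => ?_⟩
  · rintro ⟨l, a⟩ y
    obtain ⟨m, a', hx⟩ : ∃ m a', D.op ⟨l, a⟩ y = ⟨m, a'⟩ := ⟨_, _, rfl⟩
    rw [hx, hh, hh]
    exact hc.f₃_inv_mul_f₁_of_op_eq hD hx
  · rw [hh, hh, one_mul]
    exact hc.conds0.f₃_mul_inv_mul_f₃ hG a b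
  · have f₁_one_inv := hc.f₁_mk_mk (D.one l) (D.inv l a)
    rw [hG.inv_inv, hG.one_mul] at f₁_one_inv
    rw [hh, hh]
    exact (hc.conds0.f₃_mul_inv_mul_f₄ hG a b).trans (by rw [← f₁_one_inv])

end MCQData

/-- every linear extension of an MCQ is realized by an MCQ Alexander
pair: for any quadruple `(f₁,f₂,f₃,f₄)` satisfying conditions (0-i)--(4-iii), there
is an MCQ Alexander pair `(g₁, g₂)` such that `X̃(f₁,f₂,f₃,f₄)` is MCQ-isomorphic
to `X̃(g₁,g₂)`. -/
theorem linear_extension_reduces_to_alexander_pair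
    {Λ : Type u} {G : Λ → Type v} {R : Type w} [Ring R]
    (D : MCQData Λ G) (hD : D.IsMCQ)
    (f₁ f₂ : (Σ l, G l) → (Σ l, G l) → R) (f₃ f₄ : ∀ l : Λ, G l → G l → R)
    (hc : MCQData.Conds D f₁ f₂ f₃ f₄)
    (M : Type x) [AddCommGroup M] [Module R M] :
    ∃ g₁ g₂ : (Σ l, G l) → (Σ l, G l) → R,
      D.IsMCQAlexanderPair g₁ g₂ ∧
      ∃ φ : (Σ l, G l × M) → (Σ l, G l × M),
        MCQData.IsMCQHom (MCQData.quadExt D f₁ f₂ f₃ f₄ M)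
          (MCQData.alexExt D g₁ g₂ M) φ ∧
        Function.Bijective φ := by
  obtain ⟨g₁, g₂, hrel⟩ := hc.exists_quadRelPair hD
  exact ⟨g₁, g₂, hrel.isMCQAlexanderPair hD hc, hrel.exists_bijective_isMCQHom M⟩
end
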